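/- arXiv:math/0311012 — 2 statements merged into one kernel-verified Lean document; each statement's English description precedes it below -/
import Mathlib

section
/- Let V be a finite-dimensional complex vector space and W ≤ GL(V) a finite group. Then the Hilbert series of the invariant ring satisfies Molien's formula: ∑_{d≥0} dim (K[V]^W)_d · x^d = (1/|W|) ∑_{g∈W} 1/det_V(1 − g·x). -/
/-!
Every `g ∈ W` has finite order, hence is diagonalisable, and both `1 / det(1 - g x)` and the
graded trace `∑_d tr(g | ℂ[V]_d) x^d` are conjugation invariant. For `g = diag(λ)` the monomials
are eigenvectors of the induced action, so both series equal
`∏ᵢ 1 / (1 - λᵢ x) = ∑_d h_d(λ) x^d`, with `h_d` the complete homogeneous symmetric polynomial.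
Averaging over `W` then gives the dimension of the invariants in each degree, since
`|W|⁻¹ ∑_g g` is a projection onto them.
-/

open MvPolynomial

variable {n : ℕ}

/-- The matrix of a linear automorphism of `Fin n → ℂ` in the standard basis. -/
noncomputable def glMatrix (g : (Fin n → ℂ) ≃ₗ[ℂ] (Fin n → ℂ)) :
    Matrix (Fin n) (Fin n) ℂ :=
  LinearMap.toMatrix (Pi.basisFun ℂ (Fin n)) (Pi.basisFun ℂ (Fin n)) g.toLinearMap

/-- The induced action of a linear automorphism on the algebra
`ℂ[V] = ℂ[X_1, ..., X_n]` of polynomial functions on `V`. -/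
noncomputable def polyAct (g : (Fin n → ℂ) ≃ₗ[ℂ] (Fin n → ℂ)) :
    MvPolynomial (Fin n) ℂ →ₐ[ℂ] MvPolynomial (Fin n) ℂ :=
  MvPolynomial.aeval fun i => ∑ j, MvPolynomial.C (glMatrix g i j) * MvPolynomial.X j

/-- The submodule of `W`-invariant polynomials. -/
noncomputable def invariantsSubmodule (W : Subgroup ((Fin n → ℂ) ≃ₗ[ℂ] (Fin n → ℂ))) :
    Submodule ℂ (MvPolynomial (Fin n) ℂ) :=
  ⨅ g ∈ W, LinearMap.eqLocus (polyAct g).toLinearMap LinearMap.id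

/-- The reverse characteristic polynomial `det_V(1 - g·x)` of `g` acting on `V`,
as a formal power series in `x`. -/
noncomputable def detOneSub (g : (Fin n → ℂ) ≃ₗ[ℂ] (Fin n → ℂ)) : PowerSeries ℂ :=
  Matrix.det (1 - (PowerSeries.X : PowerSeries ℂ) •
    (glMatrix g).map (PowerSeries.C (R := ℂ)))

namespace Molien

open Finset

variable {R σ : Type*} [CommRing R] [Fintype σ]

noncomputable def linearSubst (A : Matrix σ σ R) : MvPolynomial σ R →ₐ[R] MvPolynomial σ R :=
  aeval fun i => ∑ j, C (A i j) * X j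

lemma linearSubst_X (A : Matrix σ σ R) (i : σ) : linearSubst A (X i) = ∑ j, C (A i j) * X j :=
  aeval_X _ i

lemma linearSubst_mul (A B : Matrix σ σ R) :
    linearSubst (A * B) = (linearSubst B).comp (linearSubst A) := by
  refine algHom_ext fun i => ?_
  simp only [AlgHom.comp_apply, linearSubst_X, map_sum, map_mul, algHom_C, algebraMap_eq,
    Matrix.mul_apply, Finset.sum_mul, Finset.mul_sum, mul_assoc]
  exact Finset.sum_comm

lemma linearSubst_one [DecidableEq σ] : linearSubst (1 : Matrix σ σ R) = AlgHom.id R _ :=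
  algHom_ext fun i => by simp [linearSubst_X, Matrix.one_apply]

lemma linearSubst_diagonal_X [DecidableEq σ] (μ : σ → R) (i : σ) :
    linearSubst (Matrix.diagonal μ) (X i) = C (μ i) * X i := by
  simp [linearSubst_X, Matrix.diagonal_apply, apply_ite C, ite_mul]

lemma linearSubst_diagonal_monomial [DecidableEq σ] (μ : σ → R) (s : σ →₀ ℕ) :
    linearSubst (Matrix.diagonal μ) (monomial s 1) = (∏ i, μ i ^ s i) • monomial s 1 := by
  simp only [monomial_eq, C_1, one_mul, Finsupp.prod_fintype _ _ fun _ => pow_zero _, map_prod,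
    map_pow, linearSubst_diagonal_X, mul_pow, prod_mul_distrib, smul_eq_C_mul]

lemma isHomogeneous_linearSubst {p : MvPolynomial σ R} {d : ℕ} (hp : p.IsHomogeneous d)
    (A : Matrix σ σ R) : (linearSubst A p).IsHomogeneous d := by
  have := hp.aeval (fun i => ∑ j, C (A i j) * X j) fun i =>
    IsHomogeneous.sum univ _ 1 fun j _ => (isHomogeneous_X R j).C_mul (A i j)
  rwa [one_mul] at this

noncomputable def linearSubstHom (A : Matrix σ σ R) (d : ℕ) :
    Module.End R (homogeneousSubmodule σ R d) :=
  (linearSubst A).toLinearMap.restrict fun _ hp => isHomogeneous_linearSubst hp A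

lemma coe_linearSubstHom_apply (A : Matrix σ σ R) (d : ℕ) (p : homogeneousSubmodule σ R d) :
    (linearSubstHom A d p : MvPolynomial σ R) = linearSubst A p :=
  rfl

lemma linearSubstHom_mul (A B : Matrix σ σ R) (d : ℕ) :
    linearSubstHom (A * B) d = linearSubstHom B d * linearSubstHom A d :=
  LinearMap.ext fun p => Subtype.ext (DFunLike.congr_fun (linearSubst_mul A B) p.1)

lemma linearSubstHom_one [DecidableEq σ] (d : ℕ) : linearSubstHom (1 : Matrix σ σ R) d = 1 :=
  LinearMap.ext fun p => Subtype.ext (DFunLike.congr_fun linearSubst_one p.1)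

variable [DecidableEq σ]

lemma setOf_degree_eq_coe_finsuppAntidiag (d : ℕ) :
    {s : σ →₀ ℕ | s.degree = d} = ↑(univ.finsuppAntidiag d : Finset (σ →₀ ℕ)) := by
  ext s
  simp [mem_finsuppAntidiag, Finsupp.degree_eq_sum]

variable (R) in
noncomputable def homogeneousBasis (d : ℕ) :
    Module.Basis (univ.finsuppAntidiag d : Finset (σ →₀ ℕ)) R (homogeneousSubmodule σ R d) :=
  (basisRestrictSupport R _).map (LinearEquiv.ofEq _ _ (by
    rw [homogeneousSubmodule_eq_finsupp_supported, setOf_degree_eq_coe_finsuppAntidiag]; rfl)).symm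

instance (d : ℕ) : Module.Finite R (homogeneousSubmodule σ R d) :=
  Module.Finite.of_basis (homogeneousBasis R d)

lemma homogeneousBasis_apply (d : ℕ) (s : (univ.finsuppAntidiag d : Finset (σ →₀ ℕ))) :
    (homogeneousBasis R d s : MvPolynomial σ R) = monomial s.1 1 := by
  change AddMonoidAlgebra.ofCoeff
    ((Finsupp.supportedEquivFinsupp _).symm (Finsupp.single s 1)).1 = _
  rw [Finsupp.supportedEquivFinsupp_symm_single, AddMonoidAlgebra.ofCoeff_single]
  rfl

section Trace

variable {ι M : Type*} [Fintype ι] [DecidableEq ι] [AddCommGroup M] [Module R M]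

lemma toMatrix_eq_diagonal_of_apply_eq_smul (b : Module.Basis ι R M) {f : Module.End R M}
    {μ : ι → R} (hf : ∀ i, f (b i) = μ i • b i) :
    LinearMap.toMatrix b b f = Matrix.diagonal μ := by
  ext i j
  rw [LinearMap.toMatrix_apply, hf, map_smul, b.repr_self, Finsupp.smul_single_one,
    Finsupp.single_apply, Matrix.diagonal_apply]
  split_ifs <;> simp_all

lemma trace_eq_sum_of_apply_eq_smul (b : Module.Basis ι R M) {f : Module.End R M}
    {μ : ι → R} (hf : ∀ i, f (b i) = μ i • b i) :
    LinearMap.trace R M f = ∑ i, μ i := by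
  rw [LinearMap.trace_eq_matrix_trace R b, toMatrix_eq_diagonal_of_apply_eq_smul b hf,
    Matrix.trace_diagonal]

end Trace

lemma trace_linearSubstHom_diagonal (μ : σ → R) (d : ℕ) :
    LinearMap.trace R _ (linearSubstHom (Matrix.diagonal μ) d) =
      ∑ s ∈ univ.finsuppAntidiag d, ∏ i, μ i ^ s i := by
  rw [trace_eq_sum_of_apply_eq_smul (homogeneousBasis R d) (μ := fun s => ∏ i, μ i ^ s.1 i)]
  · exact sum_coe_sort _ fun s : σ →₀ ℕ => ∏ i, μ i ^ s i
  · intro s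
    ext1
    rw [coe_linearSubstHom_apply, SetLike.val_smul, homogeneousBasis_apply]
    exact linearSubst_diagonal_monomial μ s

lemma trace_linearSubstHom_conj {P Q : Matrix σ σ R} (hQP : Q * P = 1) (A : Matrix σ σ R)
    (d : ℕ) :
    LinearMap.trace R _ (linearSubstHom (P * A * Q) d) =
      LinearMap.trace R _ (linearSubstHom A d) := by
  rw [linearSubstHom_mul, linearSubstHom_mul, LinearMap.trace_mul_comm, mul_assoc,
    ← linearSubstHom_mul, hQP, linearSubstHom_one, mul_one]

section PowerSeries

open PowerSeries

lemma one_sub_C_mul_X_mul_mk_pow (a : R) :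
    (1 - PowerSeries.C a * PowerSeries.X) * PowerSeries.mk (a ^ ·) = 1 := by
  have h := congrArg (rescale a) (mk_one_mul_one_sub_eq_one (S := R))
  simpa only [map_mul, map_sub, map_one, rescale_X, PowerSeries.rescale_mk, Pi.one_apply, mul_one,
    mul_comm] using h

lemma prod_one_sub_C_mul_X_mul_mk_sum_prod_pow (μ : σ → R) :
    (∏ i, (1 - PowerSeries.C (μ i) * PowerSeries.X)) *
      PowerSeries.mk (fun d => ∑ s ∈ univ.finsuppAntidiag d, ∏ i, μ i ^ s i) = 1 := by
  have hmk : PowerSeries.mk (fun d => ∑ s ∈ univ.finsuppAntidiag d, ∏ i, μ i ^ s i) =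
      ∏ i, PowerSeries.mk (μ i ^ ·) := by
    ext d
    simp only [coeff_mk, coeff_prod]
  rw [hmk, ← prod_mul_distrib]
  exact prod_eq_one fun i _ => one_sub_C_mul_X_mul_mk_pow (μ i)

end PowerSeries

section Det

variable {S : Type*} [CommRing S]

lemma det_one_sub_smul_conj {P Q : Matrix σ σ S} (hPQ : P * Q = 1) (t : S) (M : Matrix σ σ S) :
    (1 - t • (P * M * Q)).det = (1 - t • M).det := by
  have h : 1 - t • (P * M * Q) = P * (1 - t • M) * Q := by
    rw [Matrix.mul_sub, Matrix.sub_mul, mul_one, hPQ, Matrix.mul_smul, Matrix.smul_mul]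
  rw [h, Matrix.det_mul, Matrix.det_mul, mul_right_comm, ← Matrix.det_mul, hPQ, Matrix.det_one,
    one_mul]

lemma det_one_sub_smul_diagonal (t : S) (μ : σ → S) :
    (1 - t • Matrix.diagonal μ).det = ∏ i, (1 - t * μ i) := by
  rw [← Matrix.diagonal_one, ← Matrix.diagonal_smul, Matrix.diagonal_sub, Matrix.det_diagonal]
  rfl

end Det

section Diagonalization

variable {K V : Type*} [Field K] [AddCommGroup V] [Module K V]

lemma isSemisimple_of_isOfFinOrder [CharZero K] {f : Module.End K V} (hf : IsOfFinOrder f) :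
    f.IsSemisimple := by
  obtain ⟨N, hN, hfN⟩ := isOfFinOrder_iff_pow_eq_one.mp hf
  refine Module.End.isSemisimple_of_squarefree_aeval_eq_zero (p := Polynomial.X ^ N - 1) ?_ ?_
  · exact (Polynomial.X_pow_sub_one_separable_iff.mpr (Nat.cast_ne_zero.mpr hN.ne')).squarefree
  · rw [map_sub, map_pow, Polynomial.aeval_X, map_one, hfN, sub_self]

lemma exists_basis_apply_eq_smul [IsAlgClosed K] [FiniteDimensional K V] {f : Module.End K V}
    (hf : f.IsSemisimple) {ι : Type*} (b₀ : Module.Basis ι K V) :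
    ∃ (b : Module.Basis ι K V) (μ : ι → K), ∀ i, f (b i) = μ i • b i := by
  classical
  have hint : DirectSum.IsInternal fun μ : K => f.eigenspace μ :=
    DirectSum.isInternal_submodule_of_iSupIndep_of_iSup_eq_top f.eigenspaces_iSupIndep
      hf.iSup_eigenspace_eq_top
  let b := hint.collectedBasis fun μ => Module.finBasis K (f.eigenspace μ)
  let e := b.indexEquiv b₀
  refine ⟨b.reindex e, fun i => (e.symm i).1, fun i => ?_⟩
  rw [Module.Basis.reindex_apply]
  exact Module.End.mem_eigenspace_iff.mp (hint.collectedBasis_mem _ _)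

lemma exists_conj_diagonal_of_isOfFinOrder [IsAlgClosed K] [CharZero K] {A : Matrix σ σ K}
    (hA : IsOfFinOrder A) :
    ∃ (P Q : Matrix σ σ K) (μ : σ → K), P * Q = 1 ∧ Q * P = 1 ∧ A = P * Matrix.diagonal μ * Q := by
  let std := Pi.basisFun K σ
  obtain ⟨b, μ, hb⟩ := exists_basis_apply_eq_smul
    (isSemisimple_of_isOfFinOrder (Matrix.toLinAlgEquiv'.toMonoidHom.isOfFinOrder hA)) std
  refine ⟨std.toMatrix b, b.toMatrix std, μ, std.toMatrix_mul_toMatrix_flip b,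
    b.toMatrix_mul_toMatrix_flip std, ?_⟩
  rw [← toMatrix_eq_diagonal_of_apply_eq_smul b hb,
    basis_toMatrix_mul_linearMap_toMatrix_mul_basis_toMatrix, LinearMap.toMatrix_eq_toMatrix']
  exact (LinearMap.toMatrix'_toLin' A).symm

end Diagonalization

theorem inv_det_one_sub_X_smul_eq_mk_trace {K : Type*} [Field K] [IsAlgClosed K] [CharZero K]
    {A : Matrix σ σ K} (hA : IsOfFinOrder A) :
    (1 - (PowerSeries.X : PowerSeries K) • A.map PowerSeries.C).det⁻¹ =
      PowerSeries.mk fun d => LinearMap.trace K _ (linearSubstHom A d) := by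
  obtain ⟨P, Q, μ, hPQ, hQP, rfl⟩ := exists_conj_diagonal_of_isOfFinOrder hA
  have hPQ' : P.map PowerSeries.C * Q.map PowerSeries.C = 1 := by
    rw [← Matrix.map_mul, hPQ, Matrix.map_one _ (map_zero _) (map_one _)]
  have hdet :
      (1 - (PowerSeries.X : PowerSeries K) • (P * Matrix.diagonal μ * Q).map PowerSeries.C).det =
        ∏ i, (1 - PowerSeries.C (μ i) * PowerSeries.X) := by
    rw [Matrix.map_mul, Matrix.map_mul, det_one_sub_smul_conj hPQ',
      Matrix.diagonal_map (map_zero _), det_one_sub_smul_diagonal]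
    simp_rw [mul_comm]
  have htrace : (fun d => LinearMap.trace K _ (linearSubstHom (P * Matrix.diagonal μ * Q) d)) =
      fun d => ∑ s ∈ univ.finsuppAntidiag d, ∏ i, μ i ^ s i := by
    ext d
    rw [trace_linearSubstHom_conj hQP, trace_linearSubstHom_diagonal]
  rw [hdet, htrace, PowerSeries.inv_eq_iff_mul_eq_one, mul_comm,
    prod_one_sub_C_mul_X_mul_mk_sum_prod_pow]
  simp [map_prod]

section Representation

variable {G : Type*} [Group G]

-- `linearSubst` is contravariant in the matrix, hence the inverse.
noncomputable def homogeneousRep (ρ : G →* Matrix σ σ R) (d : ℕ) :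
    Representation R G (homogeneousSubmodule σ R d) where
  toFun g := linearSubstHom (ρ g⁻¹) d
  map_one' := by rw [inv_one, map_one, linearSubstHom_one]
  map_mul' g h := by rw [mul_inv_rev, map_mul, linearSubstHom_mul]

lemma homogeneousRep_apply (ρ : G →* Matrix σ σ R) (d : ℕ) (g : G) :
    homogeneousRep ρ d g = linearSubstHom (ρ g⁻¹) d :=
  rfl

lemma coe_homogeneousRep_apply (ρ : G →* Matrix σ σ R) (d : ℕ) (g : G)
    (p : homogeneousSubmodule σ R d) :
    (homogeneousRep ρ d g p : MvPolynomial σ R) = linearSubst (ρ g⁻¹) p :=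
  rfl

lemma mem_invariants_homogeneousRep_iff {ρ : G →* Matrix σ σ R} {d : ℕ}
    {p : homogeneousSubmodule σ R d} :
    p ∈ (homogeneousRep ρ d).invariants ↔ ∀ g, linearSubst (ρ g) p = p := by
  refine ⟨fun h g => ?_, fun h g => Subtype.ext ?_⟩
  · simpa only [coe_homogeneousRep_apply, inv_inv] using congrArg Subtype.val (h g⁻¹)
  · exact (coe_homogeneousRep_apply ρ d g p).trans (h g⁻¹)

lemma card_inv_mul_sum_trace_linearSubstHom {K : Type*} [Field K] [Fintype G]
    [Invertible (Nat.card G : K)] (ρ : G →* Matrix σ σ K) (d : ℕ) :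
    (Nat.card G : K)⁻¹ * ∑ g, LinearMap.trace K _ (linearSubstHom (ρ g) d) =
      Module.finrank K (homogeneousRep ρ d).invariants := by
  refine (congrArg _ ?_).trans (homogeneousRep ρ d).card_inv_mul_sum_char_eq_finrank
  refine Fintype.sum_equiv (Equiv.inv G) _ _ fun g => ?_
  rw [Equiv.inv_apply, Representation.character, homogeneousRep_apply, inv_inv]

end Representation

end Molien

open Molien

noncomputable def glMatrixHom : ((Fin n → ℂ) ≃ₗ[ℂ] (Fin n → ℂ)) →* Matrix (Fin n) (Fin n) ℂ where
  toFun := glMatrix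
  map_one' := LinearMap.toMatrix_id _
  map_mul' _ _ := LinearMap.toMatrix_mul _ _ _

lemma coeff_inv_detOneSub {g : (Fin n → ℂ) ≃ₗ[ℂ] (Fin n → ℂ)} (hg : IsOfFinOrder g) (d : ℕ) :
    PowerSeries.coeff d (detOneSub g)⁻¹ =
      LinearMap.trace ℂ _ (linearSubstHom (glMatrix g) d) := by
  have hA : IsOfFinOrder (glMatrix g) := glMatrixHom.isOfFinOrder hg
  rw [detOneSub, inv_det_one_sub_X_smul_eq_mk_trace hA, PowerSeries.coeff_mk]

lemma homogeneousSubmodule_inf_invariantsSubmodule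
    (W : Subgroup ((Fin n → ℂ) ≃ₗ[ℂ] (Fin n → ℂ))) (d : ℕ) :
    homogeneousSubmodule (Fin n) ℂ d ⊓ invariantsSubmodule W =
      ((homogeneousRep (glMatrixHom.comp W.subtype) d).invariants).map
        (homogeneousSubmodule (Fin n) ℂ d).subtype := by
  ext p
  simp only [invariantsSubmodule, Submodule.mem_inf, Submodule.mem_iInf, LinearMap.mem_eqLocus,
    Submodule.mem_map, mem_invariants_homogeneousRep_iff]
  constructor
  · rintro ⟨hp, hinv⟩
    exact ⟨⟨p, hp⟩, fun g => hinv g g.2, rfl⟩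
  · rintro ⟨q, hq, rfl⟩
    exact ⟨q.2, fun g hg => hq ⟨g, hg⟩⟩

/-- **Molien's formula.** For a finite subgroup `W ≤ GL(V)` of a finite-dimensional
complex vector space, the Hilbert series of the ring of invariants `ℂ[V]^W` equals
`(1/|W|) ∑_{g ∈ W} 1 / det_V(1 - g·x)`. -/
theorem molien_formula (W : Subgroup ((Fin n → ℂ) ≃ₗ[ℂ] (Fin n → ℂ))) [Fintype W] :
    PowerSeries.mk (fun d =>
        (Module.finrank ℂ
          ↥(MvPolynomial.homogeneousSubmodule (Fin n) ℂ d ⊓ invariantsSubmodule W) : ℂ)) =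
      (Fintype.card W : ℂ)⁻¹ •
        ∑ g : W, (detOneSub (g : (Fin n → ℂ) ≃ₗ[ℂ] (Fin n → ℂ)))⁻¹ := by
  ext d
  have : Invertible (Nat.card W : ℂ) := invertibleOfNonzero (Nat.cast_ne_zero.mpr Nat.card_pos.ne')
  rw [PowerSeries.coeff_mk, homogeneousSubmodule_inf_invariantsSubmodule,
    Submodule.finrank_map_subtype_eq, ← card_inv_mul_sum_trace_linearSubstHom,
    Nat.card_eq_fintype_card, map_smul, map_sum, smul_eq_mul]
  congr 1
  exact Fintype.sum_congr _ _ fun g =>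
    (coeff_inv_detOneSub (W.subtype.isOfFinOrder (isOfFinOrder_of_finite g)) d).symm
end

section
/- Let G be a group with a BN-pair (Tits system) with Weyl group W = N/(B∩N). Then G admits the Bruhat decomposition: G is the disjoint union over w ∈ W of the double cosets B n_w B, where n_w ∈ N is any representative of w. -/
variable {G : Type*} [Group G]

def doubleCoset (B : Subgroup G) (x : G) : Set G :=
  {g | ∃ b₁ ∈ B, ∃ b₂ ∈ B, g = b₁ * x * b₂}

structure IsBNPair (B N : Subgroup G) (S : Set (N ⧸ (B ⊓ N).subgroupOf N)) : Prop where
  normal : ((B ⊓ N).subgroupOf N).Normal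
  sup_eq_top : B ⊔ N = ⊤
  closure_eq_top : Subgroup.closure S = ⊤
  order_two : ∀ s ∈ S, orderOf s = 2
  bn3 : ∀ s ∈ S, ∀ ns : N, (QuotientGroup.mk ns : N ⧸ (B ⊓ N).subgroupOf N) = s →
    (fun b => (ns : G) * b * (ns : G)) '' (B : Set G) ≠ (B : Set G)
  bn4 : ∀ s ∈ S, ∀ ns : N, (QuotientGroup.mk ns : N ⧸ (B ⊓ N).subgroupOf N) = s →
    ∀ n : N, {g | ∃ b ∈ B, g = (ns : G) * b * (n : G)} ⊆
      doubleCoset B ((ns : G) * (n : G)) ∪ doubleCoset B (n : G)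

/-!
Every `g ∈ G` lies in some `BnB` because the union of these double cosets contains `1` and is
stable under left multiplication by `B` and by `N`; for `N` this reduces, by writing `nT ∈ W` as a
word in `S`, to the axiom `n_s B n ⊆ B n_s n B ∪ B n B`. Disjointness is proved by induction on
the word length `ℓ(w)`: if `BwB = Bw'B` with `ℓ(w) ≤ ℓ(w')` and `w = sv` with `ℓ(v) < ℓ(w)`, then
`BvB` meets `s Bw'B ⊆ Bsw'B ∪ Bw'B`; the second alternative contradicts `ℓ(v) < ℓ(w')`, and the
first gives `v = sw'`, i.e. `w = w'`.
-/

section WordLength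

variable {M : Type*} [Monoid M] (S : Set M)

/-- Junk value `0` for elements that are not products of elements of `S`. -/
noncomputable def wordLength (w : M) : ℕ :=
  sInf {k | ∃ l : List M, (∀ x ∈ l, x ∈ S) ∧ l.prod = w ∧ l.length = k}

variable {S}

theorem wordLength_prod_le_length {l : List M} (hl : ∀ x ∈ l, x ∈ S) :
    wordLength S l.prod ≤ l.length :=
  Nat.sInf_le ⟨l, hl, rfl, rfl⟩

theorem exists_list_length_eq_wordLength (hS : Submonoid.closure S = ⊤) (w : M) :
    ∃ l : List M, (∀ x ∈ l, x ∈ S) ∧ l.prod = w ∧ l.length = wordLength S w := by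
  obtain ⟨l, hl, rfl⟩ := Submonoid.exists_list_of_mem_closure (hS ▸ Submonoid.mem_top w)
  exact Nat.sInf_mem
    (s := {k | ∃ l' : List M, (∀ x ∈ l', x ∈ S) ∧ l'.prod = l.prod ∧ l'.length = k})
    ⟨l.length, l, hl, rfl, rfl⟩

theorem eq_one_of_wordLength_eq_zero (hS : Submonoid.closure S = ⊤) {w : M}
    (hw : wordLength S w = 0) : w = 1 := by
  obtain ⟨l, -, rfl, hl⟩ := exists_list_length_eq_wordLength hS w
  rw [hw, List.length_eq_zero_iff] at hl
  rw [hl, List.prod_nil]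

theorem exists_mul_wordLength_lt (hS : Submonoid.closure S = ⊤) {w : M}
    (hw : 0 < wordLength S w) : ∃ s ∈ S, ∃ v, w = s * v ∧ wordLength S v < wordLength S w := by
  obtain ⟨l, hl, rfl, hlen⟩ := exists_list_length_eq_wordLength hS w
  cases l with
  | nil => simp_all
  | cons s l =>
    refine ⟨s, hl s List.mem_cons_self, l.prod, List.prod_cons, ?_⟩
    have := wordLength_prod_le_length fun x hx => hl x (List.mem_cons_of_mem s hx)
    rw [← hlen, List.length_cons]
    omega

theorem wordLength_mul_le (hS : Submonoid.closure S = ⊤) {s : M} (hs : s ∈ S) (w : M) :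
    wordLength S (s * w) ≤ wordLength S w + 1 := by
  obtain ⟨l, hl, rfl, hlen⟩ := exists_list_length_eq_wordLength hS w
  rw [← hlen, ← List.length_cons, ← List.prod_cons]
  exact wordLength_prod_le_length (by simpa using ⟨hs, hl⟩)

end WordLength

theorem submonoid_closure_eq_top_of_inv_subset {H : Type*} [Group H] {S : Set H}
    (hS : Subgroup.closure S = ⊤) (hinv : S⁻¹ ⊆ S) : Submonoid.closure S = ⊤ := by
  rw [← Set.union_eq_left.mpr hinv, ← Subgroup.closure_toSubmonoid, hS, Subgroup.top_toSubmonoid]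

section

theorem doubleCoset_eq_doubleCoset (B : Subgroup G) (x : G) :
    doubleCoset B x = DoubleCoset.doubleCoset x B B := by
  ext g
  rw [DoubleCoset.mem_doubleCoset]
  rfl

variable {B : Subgroup G} {x g b : G}

theorem mem_doubleCoset_self (B : Subgroup G) (x : G) : x ∈ doubleCoset B x := by
  rw [doubleCoset_eq_doubleCoset]
  exact DoubleCoset.mem_doubleCoset_self B B x

theorem doubleCoset_eq_of_mem (hg : g ∈ doubleCoset B x) : doubleCoset B g = doubleCoset B x := by
  simp only [doubleCoset_eq_doubleCoset] at hg ⊢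
  exact DoubleCoset.doubleCoset_eq_of_mem hg

theorem doubleCoset_eq_of_inter_nonempty {y : G}
    (hne : (doubleCoset B x ∩ doubleCoset B y).Nonempty) : doubleCoset B x = doubleCoset B y := by
  rw [doubleCoset_eq_doubleCoset, doubleCoset_eq_doubleCoset] at hne ⊢
  exact DoubleCoset.eq_of_not_disjoint (Set.not_disjoint_iff_nonempty_inter.mpr hne)

theorem mul_mem_doubleCoset_left (hb : b ∈ B) (hg : g ∈ doubleCoset B x) :
    b * g ∈ doubleCoset B x := by
  obtain ⟨b₁, hb₁, b₂, hb₂, rfl⟩ := hg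
  exact ⟨b * b₁, mul_mem hb hb₁, b₂, hb₂, by group⟩

theorem mul_mem_doubleCoset_right (hb : b ∈ B) (hg : g ∈ doubleCoset B x) :
    g * b ∈ doubleCoset B x := by
  obtain ⟨b₁, hb₁, b₂, hb₂, rfl⟩ := hg
  exact ⟨b₁, hb₁, b₂ * b, mul_mem hb₂ hb, by group⟩

theorem doubleCoset_one (B : Subgroup G) : doubleCoset B 1 = B := by
  ext g
  refine ⟨?_, fun hg => ⟨g, hg, 1, one_mem B, by group⟩⟩
  rintro ⟨b₁, hb₁, b₂, hb₂, rfl⟩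
  simpa using mul_mem hb₁ hb₂

end

abbrev WeylGroup (B N : Subgroup G) : Type _ := N ⧸ (B ⊓ N).subgroupOf N

def bruhatCell (B N : Subgroup G) (w : WeylGroup B N) : Set G :=
  doubleCoset B (w.out : G)

section

variable {B N : Subgroup G}

theorem out_mem_bruhatCell (w : WeylGroup B N) : (w.out : G) ∈ bruhatCell B N w :=
  mem_doubleCoset_self B _

theorem bruhatCell_eq_of_inter_nonempty {w w' : WeylGroup B N}
    (hne : (bruhatCell B N w ∩ bruhatCell B N w').Nonempty) :
    bruhatCell B N w = bruhatCell B N w' :=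
  doubleCoset_eq_of_inter_nonempty hne

variable [((B ⊓ N).subgroupOf N).Normal]

theorem WeylGroup.mk_eq_one_iff {n : N} :
    (QuotientGroup.mk n : WeylGroup B N) = 1 ↔ (n : G) ∈ B := by
  rw [QuotientGroup.eq_one_iff, Subgroup.mem_subgroupOf, Subgroup.mem_inf]
  exact and_iff_left n.2

theorem doubleCoset_eq_of_mk_eq {n n' : N}
    (h : (QuotientGroup.mk n : WeylGroup B N) = QuotientGroup.mk n') :
    doubleCoset B (n : G) = doubleCoset B (n' : G) := by
  have hB : ((n⁻¹ * n' : N) : G) ∈ B := by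
    rw [← WeylGroup.mk_eq_one_iff, QuotientGroup.mk_mul, QuotientGroup.mk_inv, h, inv_mul_cancel]
  refine (doubleCoset_eq_of_mem ?_).symm
  simpa using mul_mem_doubleCoset_right hB (mem_doubleCoset_self B (n : G))

theorem bruhatCell_mk (n : N) :
    bruhatCell B N (QuotientGroup.mk n) = doubleCoset B (n : G) :=
  doubleCoset_eq_of_mk_eq (QuotientGroup.out_eq' _)

theorem bruhatCell_one : bruhatCell B N 1 = B := by
  rw [← QuotientGroup.mk_one, bruhatCell_mk, Subgroup.coe_one, doubleCoset_one]

theorem eq_one_of_bruhatCell_eq_one {w : WeylGroup B N} (hw : bruhatCell B N w = B) : w = 1 := by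
  have hout := out_mem_bruhatCell w
  rwa [hw, SetLike.mem_coe, ← WeylGroup.mk_eq_one_iff, QuotientGroup.out_eq'] at hout

end

namespace IsBNPair

variable {B N : Subgroup G} [((B ⊓ N).subgroupOf N).Normal] {S : Set (WeylGroup B N)}
  {s : WeylGroup B N}

theorem mul_self_eq_one (h : IsBNPair B N S) (hs : s ∈ S) : s * s = 1 := by
  rw [← pow_two, ← h.order_two s hs, pow_orderOf_eq_one]

theorem inv_eq_self (h : IsBNPair B N S) (hs : s ∈ S) : s⁻¹ = s :=
  inv_eq_of_mul_eq_one_right (h.mul_self_eq_one hs)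

theorem submonoid_closure_eq_top (h : IsBNPair B N S) : Submonoid.closure S = ⊤ := by
  refine submonoid_closure_eq_top_of_inv_subset h.closure_eq_top fun s hs => ?_
  rw [Set.mem_inv] at hs
  rwa [← inv_inv s, h.inv_eq_self hs]

theorem mul_mem_bruhatCell (h : IsBNPair B N S) (hs : s ∈ S) {ns : N}
    (hns : (QuotientGroup.mk ns : WeylGroup B N) = s) {w : WeylGroup B N} {g : G}
    (hg : g ∈ bruhatCell B N w) :
    (ns : G) * g ∈ bruhatCell B N (s * w) ∪ bruhatCell B N w := by
  obtain ⟨b₁, hb₁, b₂, hb₂, rfl⟩ := hg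
  have hsw : bruhatCell B N (s * w) = doubleCoset B ((ns : G) * w.out) := by
    rw [← Subgroup.coe_mul, ← bruhatCell_mk, QuotientGroup.mk_mul, hns, QuotientGroup.out_eq']
  rw [hsw]
  simp only [← mul_assoc]
  exact (h.bn4 s hs ns hns w.out ⟨b₁, hb₁, rfl⟩).imp
    (mul_mem_doubleCoset_right hb₂) (mul_mem_doubleCoset_right hb₂)

theorem exists_mem_bruhatCell_coe_mul (h : IsBNPair B N S) (n : N) {g : G}
    (hg : ∃ w, g ∈ bruhatCell B N w) : ∃ w, (n : G) * g ∈ bruhatCell B N w := by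
  suffices ∀ u : WeylGroup B N, ∀ n : N, QuotientGroup.mk n = u → ∀ g : G,
      (∃ w, g ∈ bruhatCell B N w) → ∃ w, (n : G) * g ∈ bruhatCell B N w from
    this _ n rfl g hg
  intro u
  induction u using Submonoid.induction_of_closure_eq_top_left h.submonoid_closure_eq_top with
  | one =>
    rintro n hn g ⟨w, hw⟩
    exact ⟨w, mul_mem_doubleCoset_left (WeylGroup.mk_eq_one_iff.mp hn) hw⟩
  | mul_left s hs u ih =>
    rintro n hn g hg
    obtain ⟨ns, hns⟩ := QuotientGroup.mk_surjective s
    obtain ⟨w, hw⟩ := ih (ns⁻¹ * n)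
      (by rw [QuotientGroup.mk_mul, QuotientGroup.mk_inv, hn, hns, inv_mul_cancel_left]) g hg
    have hng : (n : G) * g = ns * (((ns⁻¹ * n : N) : G) * g) := by push_cast; group
    rw [hng]
    rcases h.mul_mem_bruhatCell hs hns hw with h' | h'
    exacts [⟨_, h'⟩, ⟨_, h'⟩]

theorem exists_mem_bruhatCell (h : IsBNPair B N S) (g : G) : ∃ w, g ∈ bruhatCell B N w := by
  have hBN : Submonoid.closure ((B : Set G) ∪ N) = ⊤ := by
    refine submonoid_closure_eq_top_of_inv_subset ?_ ?_
    · rw [Subgroup.closure_union, Subgroup.closure_eq, Subgroup.closure_eq, h.sup_eq_top]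
    · rw [Set.union_inv, inv_coe_set, inv_coe_set]
  induction g using Submonoid.induction_of_closure_eq_top_left hBN with
  | one => exact ⟨1, by rw [bruhatCell_one]; exact one_mem B⟩
  | mul_left x hx g hg =>
    rcases hx with hx | hx
    · obtain ⟨w, hw⟩ := hg
      exact ⟨w, mul_mem_doubleCoset_left hx hw⟩
    · exact h.exists_mem_bruhatCell_coe_mul ⟨x, hx⟩ hg

theorem eq_of_bruhatCell_inter_nonempty_of_wordLength_le (h : IsBNPair B N S)
    {w w' : WeylGroup B N} (hle : wordLength S w ≤ wordLength S w')
    (hne : (bruhatCell B N w ∩ bruhatCell B N w').Nonempty) : w = w' := by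
  have hS := h.submonoid_closure_eq_top
  induction hk : wordLength S w using Nat.strong_induction_on generalizing w w' with
  | _ k ih =>
  rcases Nat.eq_zero_or_pos k with rfl | hpos
  · obtain rfl := eq_one_of_wordLength_eq_zero hS hk
    exact (eq_one_of_bruhatCell_eq_one
      ((bruhatCell_eq_of_inter_nonempty hne).symm.trans bruhatCell_one)).symm
  obtain ⟨s, hs, v, rfl, hv⟩ := exists_mul_wordLength_lt hS (hk ▸ hpos)
  obtain ⟨ns, hns⟩ := QuotientGroup.mk_surjective s
  have hmem : (ns : G) * v.out ∈ bruhatCell B N w' := by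
    rw [← bruhatCell_eq_of_inter_nonempty hne, ← hns, ← QuotientGroup.out_eq' v,
      ← QuotientGroup.mk_mul, bruhatCell_mk, QuotientGroup.out_eq']
    exact mem_doubleCoset_self B _
  have hns_inv : (QuotientGroup.mk ns⁻¹ : WeylGroup B N) = s := by
    rw [QuotientGroup.mk_inv, hns, h.inv_eq_self hs]
  have hcases := h.mul_mem_bruhatCell hs hns_inv hmem
  rw [Subgroup.coe_inv, inv_mul_cancel_left] at hcases
  have hw' : wordLength S w' ≤ wordLength S (s * w') + 1 := by
    simpa [← mul_assoc, h.mul_self_eq_one hs] using wordLength_mul_le hS hs (s * w')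
  rcases hcases with hc | hc
  · have hv_eq : v = s * w' :=
      ih _ (hk ▸ hv) (by omega) ⟨_, out_mem_bruhatCell v, hc⟩ rfl
    rw [hv_eq, ← mul_assoc, h.mul_self_eq_one hs, one_mul]
  · have hv_eq : v = w' := ih _ (hk ▸ hv) (by omega) ⟨_, out_mem_bruhatCell v, hc⟩ rfl
    subst hv_eq
    omega

theorem eq_of_bruhatCell_inter_nonempty (h : IsBNPair B N S) {w w' : WeylGroup B N}
    (hne : (bruhatCell B N w ∩ bruhatCell B N w').Nonempty) : w = w' := by
  rcases le_total (wordLength S w) (wordLength S w') with hle | hle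
  · exact h.eq_of_bruhatCell_inter_nonempty_of_wordLength_le hle hne
  · exact (h.eq_of_bruhatCell_inter_nonempty_of_wordLength_le hle
      (Set.inter_comm _ _ ▸ hne)).symm

end IsBNPair

/-- **Bruhat decomposition.** If `G` has a BN-pair with Weyl group `W = N/(B ∩ N)`,
then `G` is the disjoint union, over `w ∈ W`, of the double cosets `B n_w B`,
and the double coset `B n_w B` does not depend on the representative `n_w` of `w`. -/
theorem bruhat_decomposition (B N : Subgroup G)
    (S : Set (N ⧸ (B ⊓ N).subgroupOf N)) (h : IsBNPair B N S) :
    (∀ g : G, ∃ n : N, g ∈ doubleCoset B (n : G)) ∧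
    (∀ n n' : N,
      (QuotientGroup.mk n : N ⧸ (B ⊓ N).subgroupOf N) = QuotientGroup.mk n' →
      doubleCoset B (n : G) = doubleCoset B (n' : G)) ∧
    (∀ n n' : N, (doubleCoset B (n : G) ∩ doubleCoset B (n' : G)).Nonempty →
      (QuotientGroup.mk n : N ⧸ (B ⊓ N).subgroupOf N) = QuotientGroup.mk n') := by
  have := h.normal
  refine ⟨fun g => ?_, fun n n' => doubleCoset_eq_of_mk_eq, fun n n' hne => ?_⟩
  · obtain ⟨w, hw⟩ := h.exists_mem_bruhatCell g
    exact ⟨w.out, hw⟩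
  · rw [← bruhatCell_mk, ← bruhatCell_mk] at hne
    exact h.eq_of_bruhatCell_inter_nonempty hne
end
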